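/- arXiv:1312.6560 — 7 statements merged into one kernel-verified Lean document; each statement's English description precedes it below -/
import Mathlib

section
/- Let A be an abelian category, K an object, and ξᵢ : 0 → Kᵢ → Xᵢ →^{αᵢ} Y → 0 (i = 1, 2) short exact sequences with K₂ ∈ add K. If Im c(ξ₂, K) ⊆ Im c(ξ₁, K) as Γ(K)-submodules of Ext¹(Y, K), then there exists a morphism u : K₁ → K₂ with [ξ₂] = [u.ξ₁]; equivalently, α₂ factors through α₁. -/
/-!
Pushouts `[v.ξ]` are additive in `v` and compatible with composition, so the objects `Z` with
`Im c(ξ₂, Z) ⊆ Im c(ξ₁, Z)` are closed under finite biproducts and retracts. The hypothesis for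
`K` therefore passes to `K₂ ∈ add K`, and `[ξ₂] = c(ξ₂, K₂)(𝟙)` lies in `Im c(ξ₁, K₂)`.
-/

set_option linter.unusedSectionVars false

open CategoryTheory Abelian Limits

universe w v u

attribute [local instance] CategoryTheory.Abelian.hasFiniteBiproducts

variable {A : Type u} [Category.{v} A] [Abelian A]

/-- `M` belongs to `add K`: it is a direct summand of a finite direct sum of copies of `K`. -/
def InAdd (K M : A) : Prop :=
  ∃ (n : ℕ) (s : M ⟶ ⨁ (fun _ : Fin n => K)) (r : (⨁ fun _ : Fin n => K) ⟶ M),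
    s ≫ r = 𝟙 M

/-- `α` factors through `α'`. -/
def Factors {X X' Y : A} (α : X ⟶ Y) (α' : X' ⟶ Y) : Prop :=
  ∃ v : X ⟶ X', v ≫ α' = α

/-- `α` and `α'` are right equivalent. -/
def RightEquiv {X X' Y : A} (α : X ⟶ Y) (α' : X' ⟶ Y) : Prop :=
  Factors α α' ∧ Factors α' α

/-- A morphism is right minimal. -/
def RightMinimal {X Y : A} (α : X ⟶ Y) : Prop :=
  ∀ v : X ⟶ X, v ≫ α = α → IsIso v

/-- A short exact sequence `0 → K → X → Y → 0`. -/
structure SES (K Y : A) where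
  X : A
  i : K ⟶ X
  p : X ⟶ Y
  zero : i ≫ p = 0
  shortExact : (ShortComplex.mk i p zero).ShortExact

variable [HasExt.{w} A]

lemma Ext.mk₀_add' {X Y : A} (f g : X ⟶ Y) :
    Ext.mk₀ (f + g) = Ext.mk₀ f + Ext.mk₀ g := by
  letI := HasDerivedCategory.standard A
  apply Ext.ext
  simp [Ext.add_hom, ShiftedHom.mk₀, Functor.map_add]

/-- The class `[ξ] ∈ Ext¹(Y, K)` of a short exact sequence `ξ`. -/
noncomputable def SES.cls {K Y : A} (E : SES K Y) : Ext Y K 1 :=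
  E.shortExact.extClass

/-- The class `[u.ξ]` of the pushout of `ξ` along `u`. -/
noncomputable def SES.push {K Y Z : A} (E : SES K Y) (u : K ⟶ Z) : Ext Y Z 1 :=
  E.cls.comp (Ext.mk₀ u) (add_zero 1)

noncomputable instance extSMulEnd (Y K : A) : SMul (End K) (Ext Y K 1) :=
  ⟨fun g e => e.comp (Ext.mk₀ g) (add_zero 1)⟩

lemma extSmul_def {Y K : A} (g : End K) (e : Ext Y K 1) :
    g • e = e.comp (Ext.mk₀ g) (add_zero 1) := rfl

/-- `Ext¹(Y, K)` as a left module over `Γ(K) = End K`, via pushout. -/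
noncomputable instance extModuleEnd (Y K : A) : Module (End K) (Ext Y K 1) where
  one_smul e := by rw [extSmul_def]; exact Ext.comp_mk₀_id e
  mul_smul g h e := by
    rw [extSmul_def, extSmul_def, extSmul_def,
      Ext.comp_assoc_of_third_deg_zero, Ext.mk₀_comp_mk₀]
    rfl
  smul_add g e f := by
    rw [extSmul_def, extSmul_def, extSmul_def]; exact Ext.add_comp e f _ _
  add_smul g h e := by
    rw [extSmul_def, extSmul_def, extSmul_def, Ext.mk₀_add', Ext.comp_add]
  zero_smul e := by rw [extSmul_def]; rw [Ext.mk₀_zero, Ext.comp_zero]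
  smul_zero g := by rw [extSmul_def]; exact Ext.zero_comp _ _ _ _ _

/-- The connecting map `c(ξ, K) : Hom(K₁, K) → Ext¹(Y, K)`, `u ↦ [u.ξ]`,
as a morphism of left `Γ(K) = End K`-modules. -/
noncomputable def SES.conn {K₁ Y : A} (E : SES K₁ Y) (K : A) :
    (K₁ ⟶ K) →ₗ[End K] Ext Y K 1 where
  toFun u := E.push u
  map_add' u v := by
    dsimp [SES.push]
    rw [Ext.mk₀_add', Ext.comp_add]
  map_smul' g u := by
    dsimp [SES.push]
    rw [End.smul_right, extSmul_def, Ext.comp_assoc_of_third_deg_zero,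
      Ext.mk₀_comp_mk₀]

/-- Right minimality for a morphism of modules. -/
def ModRightMinimal {R : Type*} [Ring R] {M N : Type*} [AddCommGroup M] [AddCommGroup N]
    [Module R M] [Module R N] (c : M →ₗ[R] N) : Prop :=
  ∀ g : M →ₗ[R] M, c.comp g = c → Function.Bijective g

universe w'

/-- The `R`-module `M` admits a projective cover. -/
def HasProjCover (R : Type*) [Ring R] (M : Type w') [AddCommGroup M] [Module R M] : Prop :=
  ∃ (P : Type w') (_ : AddCommGroup P) (_ : Module R P) (f : P →ₗ[R] M),
    Module.Projective R P ∧ Function.Surjective f ∧ ModRightMinimal f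

/-- `ξ` is a universal `L`-extension of `Y` by `K`. -/
def IsUniversalExt (K : A) {K₁ Y : A} (E : SES K₁ Y) (L : Submodule (End K) (Ext Y K 1)) :
    Prop :=
  InAdd K K₁ ∧ LinearMap.range (E.conn K) = L ∧ ModRightMinimal (E.conn K)

lemma InAdd.self (K : A) : InAdd K K := by
  refine ⟨1, biproduct.ι (fun _ : Fin 1 => K) (0 : Fin 1), biproduct.π (fun _ : Fin 1 => K) 0, ?_⟩
  simp

namespace SES

variable {K₁ K₂ Y Z Z' : A}

lemma push_id (E : SES K₁ Y) : E.push (𝟙 K₁) = E.cls :=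
  Ext.comp_mk₀_id E.cls

lemma conn_apply (E : SES K₁ Y) (u : K₁ ⟶ Z) : E.conn Z u = E.push u := rfl

lemma conn_comp (E : SES K₁ Y) (u : K₁ ⟶ Z) (g : Z ⟶ Z') :
    E.conn Z' (u ≫ g) = (E.conn Z u).comp (Ext.mk₀ g) (add_zero 1) := by
  simp only [conn_apply, push]
  rw [Ext.comp_assoc_of_third_deg_zero, Ext.mk₀_comp_mk₀]

variable (E₁ : SES K₁ Y) (E₂ : SES K₂ Y)

lemma conn_comp_mem_range {v : K₂ ⟶ Z} (hv : E₂.conn Z v ∈ LinearMap.range (E₁.conn Z))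
    (g : Z ⟶ Z') : E₂.conn Z' (v ≫ g) ∈ LinearMap.range (E₁.conn Z') := by
  obtain ⟨w, hw⟩ := hv
  exact ⟨w ≫ g, by rw [conn_comp, conn_comp, hw]⟩

lemma range_conn_le_of_retraction {s : Z' ⟶ Z} {r : Z ⟶ Z'} (hsr : s ≫ r = 𝟙 Z')
    (hZ : LinearMap.range (E₂.conn Z) ≤ LinearMap.range (E₁.conn Z)) :
    LinearMap.range (E₂.conn Z') ≤ LinearMap.range (E₁.conn Z') := by
  rintro _ ⟨v, rfl⟩
  simpa [hsr] using conn_comp_mem_range E₁ E₂ (hZ ⟨v ≫ s, rfl⟩) r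

lemma range_conn_le_biproduct {J : Type} [Fintype J] (f : J → A)
    (hf : ∀ j, LinearMap.range (E₂.conn (f j)) ≤ LinearMap.range (E₁.conn (f j))) :
    LinearMap.range (E₂.conn (⨁ f)) ≤ LinearMap.range (E₁.conn (⨁ f)) := by
  rintro _ ⟨v, rfl⟩
  have hv : v = ∑ j, (v ≫ biproduct.π f j) ≫ biproduct.ι f j := by
    simp only [Category.assoc, ← Preadditive.comp_sum, biproduct.total, Category.comp_id]
  rw [hv, map_sum]
  exact Submodule.sum_mem _ fun j _ =>
    conn_comp_mem_range E₁ E₂ (hf j ⟨v ≫ biproduct.π f j, rfl⟩) _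

lemma range_conn_le_of_inAdd {K M : A} (hM : InAdd K M)
    (hK : LinearMap.range (E₂.conn K) ≤ LinearMap.range (E₁.conn K)) :
    LinearMap.range (E₂.conn M) ≤ LinearMap.range (E₁.conn M) := by
  obtain ⟨n, s, r, hsr⟩ := hM
  exact range_conn_le_of_retraction E₁ E₂ hsr (range_conn_le_biproduct E₁ E₂ _ fun _ => hK)

end SES

/-- if `K₂ ∈ add K` and `Im c(ξ₂, K) ⊆ Im c(ξ₁, K)`, then there exists
`u : K₁ ⟶ K₂` with `[ξ₂] = [u.ξ₁]`; equivalently `α₂` factors through `α₁` in the sense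
that `α₁` factors through `α₂`. -/
theorem stmt2 {K K₁ K₂ Y : A} (E₁ : SES K₁ Y) (E₂ : SES K₂ Y) (h : InAdd K K₂)
    (hle : LinearMap.range (E₂.conn K) ≤ LinearMap.range (E₁.conn K)) :
    ∃ u : K₁ ⟶ K₂, E₂.cls = E₁.push u := by
  obtain ⟨u, hu⟩ := SES.range_conn_le_of_inAdd E₁ E₂ h hle ⟨𝟙 K₂, rfl⟩
  exact ⟨u, E₂.push_id.symm.trans hu.symm⟩
end

section
/- Let A be an abelian category and K, K', Y objects with K' ∈ add K. The map Hom(Y, K') → Hom_{Γ(K)}(Hom(K', K), Hom(Y, K)) sending u : Y → K' to Hom(u, K) (precomposition with u) is an isomorphism of abelian groups, natural in Y. -/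
set_option linter.unusedSectionVars false

open CategoryTheory Abelian Limits

universe w v u

attribute [local instance] CategoryTheory.Abelian.hasFiniteBiproducts

variable {A : Type u} [Category.{v} A] [Abelian A]

variable [HasExt.{w} A]

universe w'

/-- The map `Hom(Y, K') → Hom_{Γ(K)}(Hom(K', K), Hom(Y, K))`, `u ↦ Hom(u, K)`,
i.e. `u` is sent to the `Γ(K)`-linear map `f ↦ u ≫ f`. -/
def precompHom (K K' Y : A) (u : Y ⟶ K') : (K' ⟶ K) →ₗ[End K] (Y ⟶ K) where
  toFun f := u ≫ f
  map_add' f g := by simp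
  map_smul' r f := by
    show u ≫ (f ≫ r) = (u ≫ f) ≫ r
    simp

/-- for `K' ∈ add K`, the map `u ↦ Hom(u, K)` is an isomorphism of
abelian groups `Hom(Y, K') ≅ Hom_{Γ(K)}(Hom(K', K), Hom(Y, K))`, natural in `Y`. -/
theorem stmt3 {K K' : A} (hK' : InAdd K K') (Y : A) :
    Function.Bijective (precompHom K K' Y) ∧
    (∀ u v : Y ⟶ K',
      precompHom K K' Y (u + v) = precompHom K K' Y u + precompHom K K' Y v) ∧
    (∀ (Y' : A) (h : Y' ⟶ Y) (u : Y ⟶ K') (f : K' ⟶ K),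
      precompHom K K' Y' (h ≫ u) f = h ≫ precompHom K K' Y u f) := by
  obtain ⟨n, s, r, hsr⟩ := hK'
  refine ⟨⟨?_, ?_⟩, ?_, ?_⟩
  · intro u v huv
    have h : ∀ f : K' ⟶ K, u ≫ f = v ≫ f := fun f => LinearMap.congr_fun huv f
    have hs : u ≫ s = v ≫ s := by
      apply biproduct.hom_ext
      intro i
      simpa using h (s ≫ biproduct.π _ i)
    calc u = u ≫ s ≫ r := by rw [hsr, Category.comp_id]
      _ = v ≫ s ≫ r := by rw [← Category.assoc, hs, Category.assoc]
      _ = v := by rw [hsr, Category.comp_id]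
  · intro φ
    refine ⟨biproduct.lift (fun i => φ (s ≫ biproduct.π _ i)) ≫ r, ?_⟩
    ext f
    show (biproduct.lift (fun i => φ (s ≫ biproduct.π _ i)) ≫ r) ≫ f = φ f
    have total : (∑ i : Fin n, biproduct.π (fun _ : Fin n => K) i ≫
        biproduct.ι (fun _ : Fin n => K) i) = 𝟙 _ := biproduct.total
    calc (biproduct.lift (fun i => φ (s ≫ biproduct.π _ i)) ≫ r) ≫ f
        = biproduct.lift (fun i => φ (s ≫ biproduct.π _ i)) ≫
            (∑ i : Fin n, biproduct.π (fun _ : Fin n => K) i ≫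
              biproduct.ι (fun _ : Fin n => K) i) ≫ (r ≫ f) := by
          rw [total, Category.id_comp, Category.assoc]
      _ = ∑ i : Fin n, φ (s ≫ biproduct.π _ i) ≫
            (biproduct.ι (fun _ : Fin n => K) i ≫ r ≫ f) := by
          rw [Preadditive.sum_comp, Preadditive.comp_sum]
          simp
      _ = ∑ i : Fin n, φ (s ≫ biproduct.π _ i ≫ biproduct.ι (fun _ : Fin n => K) i ≫ r ≫ f) := by
          refine Finset.sum_congr rfl fun i _ => ?_
          rw [← End.smul_right, ← map_smul, End.smul_right, Category.assoc]
      _ = φ (s ≫ (∑ i : Fin n, biproduct.π (fun _ : Fin n => K) i ≫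
            biproduct.ι (fun _ : Fin n => K) i) ≫ r ≫ f) := by
          rw [← map_sum, Preadditive.sum_comp, Preadditive.comp_sum]
          simp
      _ = φ f := by rw [total, Category.id_comp, ← Category.assoc, hsr, Category.id_comp]
  · intro u v
    ext f
    show (u + v) ≫ f = u ≫ f + v ≫ f
    simp
  · intro Y' h u f
    show (h ≫ u) ≫ f = h ≫ u ≫ f
    simp
end

section
/- Let A be an abelian category and K, K', Y objects with K' ∈ add K. The map Ext¹(Y, K') → Hom_{Γ(K)}(Hom(K', K), Ext¹(Y, K)) sending a class [ξ] to the connecting map c(ξ, K) is an isomorphism of abelian groups. -/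
/-!
Since `K'` is a retract of some `Kⁿ`, there are `aᵢ : K' ⟶ K` and `bᵢ : K ⟶ K'` with
`∑ aᵢ ≫ bᵢ = 𝟙`. The inverse sends `φ` to `∑ bᵢ.φ(aᵢ)` (pushout of `φ(aᵢ)` along `bᵢ`):
composing with `pushHom` in one order is pushout along `∑ aᵢ ≫ bᵢ`, in the other it
uses the `Γ(K)`-linearity `φ(aᵢ ≫ bᵢ ≫ f) = (bᵢ ≫ f).φ(aᵢ)`.
-/

set_option linter.unusedSectionVars false

open CategoryTheory Abelian Limits

universe w v u

attribute [local instance] CategoryTheory.Abelian.hasFiniteBiproducts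

variable {A : Type u} [Category.{v} A] [Abelian A]

variable [HasExt.{w} A]

universe w'

/-- The map `Ext¹(Y, K') → Hom_{Γ(K)}(Hom(K', K), Ext¹(Y, K))` sending a class `e`
to the connecting map `f ↦ [f.e]` (pushout along `f`). -/
noncomputable def pushHom (K K' Y : A) (e : Ext Y K' 1) :
    (K' ⟶ K) →ₗ[End K] Ext Y K 1 where
  toFun f := e.comp (Ext.mk₀ f) (add_zero 1)
  map_add' f g := by
    rw [Ext.mk₀_add', Ext.comp_add]
  map_smul' r f := by
    show e.comp (Ext.mk₀ (f ≫ r)) _ = r • (e.comp (Ext.mk₀ f) (add_zero 1))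
    rw [extSmul_def, Ext.comp_assoc_of_third_deg_zero, Ext.mk₀_comp_mk₀]

lemma InAdd.exists_sum_comp_eq_id {K K' : A} (h : InAdd K K') :
    ∃ (n : ℕ) (a : Fin n → (K' ⟶ K)) (b : Fin n → (K ⟶ K')), ∑ i, a i ≫ b i = 𝟙 K' := by
  obtain ⟨n, s, r, hsr⟩ := h
  let B := fun _ : Fin n => K
  refine ⟨n, fun i => s ≫ biproduct.π B i, fun i => biproduct.ι B i ≫ r, ?_⟩
  calc ∑ i, (s ≫ biproduct.π B i) ≫ biproduct.ι B i ≫ r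
      = s ≫ (∑ i, biproduct.π B i ≫ biproduct.ι B i) ≫ r := by
        simp only [Preadditive.sum_comp, Preadditive.comp_sum, Category.assoc]
    _ = 𝟙 K' := by rw [biproduct.total, Category.id_comp, hsr]

section PushHom

variable {K K' Y : A}

lemma pushHom_apply (e : Ext Y K' 1) (f : K' ⟶ K) :
    pushHom K K' Y e f = e.comp (Ext.mk₀ f) (add_zero 1) := rfl

lemma pushHom_add (e e' : Ext Y K' 1) :
    pushHom K K' Y (e + e') = pushHom K K' Y e + pushHom K K' Y e' :=
  LinearMap.ext fun f => Ext.add_comp e e' (Ext.mk₀ f) (add_zero 1)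

variable {ι : Type*} [Fintype ι] {a : ι → (K' ⟶ K)} {b : ι → (K ⟶ K')}

lemma sum_pushHom_comp_eq_self (hab : ∑ i, a i ≫ b i = 𝟙 K') (e : Ext Y K' 1) :
    ∑ i, (pushHom K K' Y e (a i)).comp (Ext.mk₀ (b i)) (add_zero 1) = e := by
  simp only [pushHom_apply, Ext.comp_assoc_of_third_deg_zero, Ext.mk₀_comp_mk₀]
  rw [← Ext.comp_sum, ← Ext.mk₀_sum, hab, Ext.comp_mk₀_id]

lemma pushHom_sum_comp_eq_self (hab : ∑ i, a i ≫ b i = 𝟙 K')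
    (φ : (K' ⟶ K) →ₗ[End K] Ext Y K 1) :
    pushHom K K' Y (∑ i, (φ (a i)).comp (Ext.mk₀ (b i)) (add_zero 1)) = φ := by
  ext f
  calc (∑ i, (φ (a i)).comp (Ext.mk₀ (b i)) (add_zero 1)).comp (Ext.mk₀ f) (add_zero 1)
      = ∑ i, φ (a i ≫ b i ≫ f) := by
        rw [Ext.sum_comp]
        refine Finset.sum_congr rfl fun i _ => ?_
        have h := φ.map_smul (b i ≫ f) (a i)
        rw [End.smul_right, extSmul_def] at h
        rw [h, Ext.comp_assoc_of_third_deg_zero, Ext.mk₀_comp_mk₀]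
    _ = φ ((∑ i, a i ≫ b i) ≫ f) := by
        simp only [← map_sum, Preadditive.sum_comp, Category.assoc]
    _ = φ f := by rw [hab, Category.id_comp]

end PushHom

/-- for `K' ∈ add K`, the map `[ξ] ↦ c(ξ, K)` is an isomorphism of
abelian groups `Ext¹(Y, K') ≅ Hom_{Γ(K)}(Hom(K', K), Ext¹(Y, K))`. -/
theorem stmt4 {K K' : A} (hK' : InAdd K K') (Y : A) :
    Function.Bijective (pushHom K K' Y) ∧
    (∀ e e' : Ext Y K' 1, pushHom K K' Y (e + e') = pushHom K K' Y e + pushHom K K' Y e') := by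
  obtain ⟨n, a, b, hab⟩ := hK'.exists_sum_comp_eq_id
  refine ⟨Function.bijective_iff_has_inverse.mpr
    ⟨fun φ => ∑ i, (φ (a i)).comp (Ext.mk₀ (b i)) (add_zero 1), ?_, ?_⟩, pushHom_add⟩
  · exact sum_pushHom_comp_eq_self hab
  · exact pushHom_sum_comp_eq_self hab
end

section
/- Let A be an abelian category and ξ : 0 → K → X →^{α} Y → 0 a short exact sequence. Then α is right minimal if and only if the connecting map c(ξ, K) : Hom(K, K) → Ext¹(Y, K) is a right minimal morphism of left Γ(K)-modules. -/
set_option linter.unusedSectionVars false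

open CategoryTheory Abelian Limits

universe w v u

attribute [local instance] CategoryTheory.Abelian.hasFiniteBiproducts

variable {A : Type u} [Category.{v} A] [Abelian A]

variable [HasExt.{w} A]

universe w'

/-!
An endomorphism `v` of `X` with `v ≫ α = α` is `𝟙 + t ≫ i` for some `t : X ⟶ K`, since `i` is a
kernel of `α`; by the long exact `Ext`-sequence, the `w : K ⟶ K` with `[w.ξ] = [ξ]` are exactly the
`𝟙 + i ≫ t`. A `Γ(K)`-linear endomorphism of the regular module `Γ(K)` is right multiplication by
its value at `1`, hence bijective iff that value is a unit. So right minimality of `α`, resp. of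
`c(ξ, K)`, says that every `𝟙 + t ≫ i`, resp. every `𝟙 + i ≫ t`, is invertible, and these agree
by Jacobson's lemma: `1 + ab` is invertible iff `1 + ba` is.
-/

theorem modRightMinimal_iff_forall_isUnit {R N : Type*} [Ring R] [AddCommGroup N] [Module R N]
    (c : R →ₗ[R] N) : ModRightMinimal c ↔ ∀ a : R, c a = c 1 → IsUnit a := by
  have eq_mul_apply_one (g : R →ₗ[R] R) : ⇑g = (· * g 1) :=
    funext fun r => by simpa using g.map_smul r 1
  refine ⟨fun h a ha => ?_, fun h g hg => ?_⟩
  · rw [IsUnit.isUnit_iff_mulRight_bijective]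
    exact h (LinearMap.toSpanSingleton R R a) (LinearMap.ext_ring (by simpa using ha))
  · rw [eq_mul_apply_one g, ← IsUnit.isUnit_iff_mulRight_bijective]
    exact h _ (by rw [← LinearMap.comp_apply, hg])

namespace CategoryTheory.Preadditive

variable {C : Type*} [Category C] [Preadditive C] {X Y : C}

theorem isIso_id_add_comp_of_isIso (a : X ⟶ Y) (b : Y ⟶ X) [IsIso (𝟙 X + a ≫ b)] :
    IsIso (𝟙 Y + b ≫ a) := by
  set c := inv (𝟙 X + a ≫ b)
  refine ⟨𝟙 Y - b ≫ c ≫ a, ?_, ?_⟩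
  · calc (𝟙 Y + b ≫ a) ≫ (𝟙 Y - b ≫ c ≫ a) = 𝟙 Y + b ≫ a - b ≫ (𝟙 X + a ≫ b) ≫ c ≫ a := by
          simp only [add_comp, comp_add, comp_sub, Category.id_comp, Category.comp_id,
            Category.assoc]
      _ = 𝟙 Y := by rw [IsIso.hom_inv_id_assoc, add_sub_cancel_right]
  · calc (𝟙 Y - b ≫ c ≫ a) ≫ (𝟙 Y + b ≫ a) = 𝟙 Y + b ≫ a - b ≫ c ≫ (𝟙 X + a ≫ b) ≫ a := by
          simp only [add_comp, comp_add, sub_comp, Category.id_comp, Category.comp_id,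
            Category.assoc]
          abel
      _ = 𝟙 Y := by rw [IsIso.inv_hom_id_assoc, add_sub_cancel_right]

theorem isIso_id_add_comp_iff (a : X ⟶ Y) (b : Y ⟶ X) :
    IsIso (𝟙 X + a ≫ b) ↔ IsIso (𝟙 Y + b ≫ a) :=
  ⟨fun _ => isIso_id_add_comp_of_isIso a b, fun _ => isIso_id_add_comp_of_isIso b a⟩

end CategoryTheory.Preadditive

theorem CategoryTheory.ShortComplex.Exact.rightMinimal_g_iff {S : ShortComplex A}
    (hS : S.Exact) [Mono S.f] :
    RightMinimal S.g ↔ ∀ t : S.X₂ ⟶ S.X₁, IsIso (𝟙 S.X₂ + t ≫ S.f) := by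
  refine ⟨fun h t => h _ (by simp), fun h v hv => ?_⟩
  have := h (hS.lift (v - 𝟙 S.X₂) (by simp [hv]))
  rwa [hS.lift_f, add_sub_cancel] at this

theorem SES.push_eq_zero_iff {K Y Z : A} (E : SES K Y) (u : K ⟶ Z) :
    E.push u = 0 ↔ ∃ t : E.X ⟶ Z, E.i ≫ t = u := by
  refine ⟨fun h => ?_, ?_⟩
  · obtain ⟨x, hx⟩ := Ext.contravariant_sequence_exact₁ E.shortExact Z (Ext.mk₀ u) (add_zero 1) h
    obtain ⟨t, rfl⟩ := (Ext.mk₀_bijective E.X Z).2 x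
    exact ⟨t, (Ext.mk₀_bijective K Z).1 (by simpa using hx)⟩
  · rintro ⟨t, rfl⟩
    rw [SES.push, ← Ext.mk₀_comp_mk₀, ← Ext.comp_assoc_of_third_deg_zero, SES.cls,
      E.shortExact.extClass_comp, Ext.zero_comp]

theorem SES.push_eq_push_iff {K Y Z : A} (E : SES K Y) (u u' : K ⟶ Z) :
    E.push u = E.push u' ↔ ∃ t : E.X ⟶ Z, u' + E.i ≫ t = u := by
  change E.conn Z u = E.conn Z u' ↔ _
  rw [← sub_eq_zero, ← map_sub]
  simp only [SES.conn, LinearMap.coe_mk, AddHom.coe_mk, E.push_eq_zero_iff, eq_sub_iff_add_eq']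

/-- `α` is right minimal iff the connecting map
`c(ξ, K) : Hom(K, K) → Ext¹(Y, K)` is right minimal as a morphism of `Γ(K)`-modules. -/
theorem stmt8 {K Y : A} (E : SES K Y) :
    RightMinimal E.p ↔ ModRightMinimal (E.conn K) := by
  have := E.shortExact.mono_f
  calc RightMinimal E.p ↔ ∀ t : E.X ⟶ K, IsIso (𝟙 E.X + t ≫ E.i) :=
        E.shortExact.exact.rightMinimal_g_iff
    _ ↔ ∀ t : E.X ⟶ K, IsIso (𝟙 K + E.i ≫ t) :=
        forall_congr' fun t => (Preadditive.isIso_id_add_comp_iff _ _).symm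
    _ ↔ ∀ w : K ⟶ K, E.push w = E.push (𝟙 K) → IsIso w := by
        simp only [E.push_eq_push_iff, forall_exists_index]
        rw [forall_comm]
        simp only [forall_eq']
    _ ↔ ModRightMinimal (E.conn K) := by
        rw [modRightMinimal_iff_forall_isUnit]
        simp only [isUnit_iff_isIso]
        rfl
end

section
/- Let A be an abelian category, ξ : 0 → K → X →^{α} Y → 0 a short exact sequence, and K' an object with K ∈ add K'. Then α is right minimal if and only if the connecting map c(ξ, K') : Hom(K, K') → Ext¹(Y, K') is a right minimal morphism of left Γ(K')-modules. -/
set_option linter.unusedSectionVars false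

open CategoryTheory Abelian Limits

universe w v u

attribute [local instance] CategoryTheory.Abelian.hasFiniteBiproducts

variable {A : Type u} [Category.{v} A] [Abelian A]

variable [HasExt.{w} A]

universe w'

/-! The endomorphisms of `K ∈ add K'` are seen by `Hom(-, K')`, so `End K'`-linear endomorphisms
of `Hom(K, K')` are precompositions `w ≫ -`. Such a `w` commutes with the connecting map iff
`w - 𝟙` factors through `i`, and `v ≫ α = α` iff `v - 𝟙` factors through `i`. The two
perturbations `𝟙 + i ≫ t` of `K` and `𝟙 + t ≫ i` of `X` are invertible together, so both
minimality conditions say that all of them are isomorphisms. -/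

namespace CategoryTheory.Preadditive

variable {C : Type*} [Category C] [Preadditive C]

lemma isIso_id_add_comp_of_isIso_id_add_comp {X K : C} (t : X ⟶ K) (i : K ⟶ X)
    [IsIso (𝟙 X + t ≫ i)] : IsIso (𝟙 K + i ≫ t) := by
  set u := inv (𝟙 X + t ≫ i)
  have hu₁ : t ≫ i ≫ u = 𝟙 X - u := by
    have := IsIso.hom_inv_id (𝟙 X + t ≫ i)
    rw [Preadditive.add_comp, Category.id_comp, Category.assoc] at this
    rw [eq_sub_iff_add_eq', this]
  have hu₂ : u ≫ t ≫ i = 𝟙 X - u := by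
    have := IsIso.inv_hom_id (𝟙 X + t ≫ i)
    rw [Preadditive.comp_add, Category.comp_id] at this
    rw [eq_sub_iff_add_eq', this]
  -- as for `1 + ab` and `1 + ba` in a ring
  refine ⟨𝟙 K - i ≫ u ≫ t, ?_, ?_⟩
  · have : i ≫ t ≫ i ≫ u ≫ t = i ≫ t - i ≫ u ≫ t := by
      rw [reassoc_of% hu₁, Preadditive.sub_comp, Preadditive.comp_sub, Category.id_comp]
    simp only [Preadditive.add_comp, Preadditive.comp_sub, Category.id_comp, Category.comp_id,
      Category.assoc, this]
    abel
  · have : i ≫ u ≫ t ≫ i ≫ t = i ≫ t - i ≫ u ≫ t := by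
      rw [reassoc_of% hu₂, Preadditive.sub_comp, Preadditive.comp_sub, Category.id_comp]
    simp only [Preadditive.sub_comp, Preadditive.comp_add, Category.id_comp, Category.comp_id,
      Category.assoc, this]
    abel

@[simps]
def leftCompEnd {P Q : C} (R : C) (f : P ⟶ Q) : (Q ⟶ R) →ₗ[End R] (P ⟶ R) where
  toFun g := f ≫ g
  map_add' _ _ := Preadditive.comp_add _ _ _ _ _ _
  map_smul' _ _ := by simp only [End.smul_right, Category.assoc, RingHom.id_apply]

end CategoryTheory.Preadditive

open Preadditive

namespace InAdd

variable {K' M : A}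

lemma hom_ext (h : InAdd K' M) {W : A} {x y : W ⟶ M} (hxy : ∀ u : M ⟶ K', x ≫ u = y ≫ u) :
    x = y := by
  obtain ⟨n, s, r, hsr⟩ := h
  suffices x ≫ s = y ≫ s by
    rw [← Category.comp_id x, ← Category.comp_id y, ← hsr, reassoc_of% this]
  ext j
  simpa using hxy (s ≫ biproduct.π _ j)

lemma exists_comp_eq (h : InAdd K' M) {L X : A} (i : L ⟶ X) (a : L ⟶ M)
    (ha : ∀ u : M ⟶ K', ∃ φ : X ⟶ K', i ≫ φ = a ≫ u) : ∃ t : X ⟶ M, i ≫ t = a := by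
  obtain ⟨n, s, r, hsr⟩ := h
  choose φ hφ using fun j => ha (s ≫ biproduct.π _ j)
  have hlift : i ≫ biproduct.lift φ = a ≫ s := by
    ext j
    simpa using hφ j
  exact ⟨biproduct.lift φ ≫ r, by rw [reassoc_of% hlift, hsr, Category.comp_id]⟩

lemma exists_eq_leftCompEnd (h : InAdd K' M) (g : (M ⟶ K') →ₗ[End K'] (M ⟶ K')) :
    ∃ w : M ⟶ M, g = leftCompEnd K' w := by
  obtain ⟨n, s, r, hsr⟩ := h
  have hg : ∀ (x : M ⟶ K') (y : End K'), g (x ≫ y) = g x ≫ y := fun x y => g.map_smul y x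
  refine ⟨biproduct.lift (fun j => g (s ≫ biproduct.π _ j)) ≫ r, LinearMap.ext fun u => ?_⟩
  have hu : u = ∑ j, (s ≫ biproduct.π _ j) ≫ biproduct.ι (fun _ : Fin n => K') j ≫ r ≫ u :=
    calc u = s ≫ (∑ j, biproduct.π _ j ≫ biproduct.ι (fun _ : Fin n => K') j) ≫ r ≫ u := by
          rw [biproduct.total, Category.id_comp, reassoc_of% hsr]
      _ = _ := by simp only [Preadditive.sum_comp, Preadditive.comp_sum, Category.assoc]
  conv_lhs => rw [hu]
  simp only [map_sum, hg]
  simp only [leftCompEnd_apply, biproduct.lift_eq, Preadditive.sum_comp, Category.assoc]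

lemma isIso_of_bijective_comp (h : InAdd K' M) (w : M ⟶ M)
    (hw : Function.Bijective fun u : M ⟶ K' => w ≫ u) : IsIso w := by
  obtain ⟨t, hwt⟩ := h.exists_comp_eq w (𝟙 M) fun u => by simpa using hw.2 u
  refine ⟨t, hwt, h.hom_ext fun u => hw.1 ?_⟩
  simp only [Category.assoc, reassoc_of% hwt, Category.id_comp]

end InAdd

namespace SES

variable {K Y : A} (E : SES K Y)

lemma comp_p_eq_p_iff (v : E.X ⟶ E.X) : v ≫ E.p = E.p ↔ ∃ t : E.X ⟶ K, v = 𝟙 E.X + t ≫ E.i := by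
  have := E.shortExact.mono_f
  constructor
  · intro hv
    have hk : (v - 𝟙 E.X) ≫ E.p = 0 := by rw [Preadditive.sub_comp, hv, Category.id_comp, sub_self]
    exact ⟨E.shortExact.exact.lift _ hk, by rw [E.shortExact.exact.lift_f _ hk]; abel⟩
  · rintro ⟨t, rfl⟩
    simp [Preadditive.add_comp, E.zero]

lemma conn_eq_zero_iff {Z : A} (u : K ⟶ Z) : E.conn Z u = 0 ↔ ∃ t : E.X ⟶ Z, E.i ≫ t = u := by
  constructor
  · intro hu
    obtain ⟨x, hx⟩ := Ext.contravariant_sequence_exact₁ E.shortExact Z (Ext.mk₀ u) (add_zero 1) hu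
    obtain ⟨t, rfl⟩ := (Ext.mk₀_bijective _ _).2 x
    exact ⟨t, (Ext.mk₀_bijective _ _).1 (by simpa using hx)⟩
  · rintro ⟨t, rfl⟩
    change E.shortExact.extClass.comp (Ext.mk₀ (E.i ≫ t)) (add_zero 1) = 0
    rw [← Ext.mk₀_comp_mk₀]
    exact E.shortExact.extClass_comp_assoc (h := add_zero 1) _

lemma conn_comp_leftCompEnd_eq_iff {K' : A} (h : InAdd K' K) (w : K ⟶ K) :
    (E.conn K').comp (leftCompEnd K' w) = E.conn K' ↔ ∃ t : E.X ⟶ K, w = 𝟙 K + E.i ≫ t := by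
  have key : ∀ u : K ⟶ K', E.conn K' (w ≫ u) = E.conn K' u ↔ E.conn K' ((w - 𝟙 K) ≫ u) = 0 := by
    intro u
    rw [Preadditive.sub_comp, Category.id_comp, map_sub, sub_eq_zero]
  constructor
  · intro hw
    obtain ⟨t, ht⟩ := h.exists_comp_eq E.i (w - 𝟙 K) fun u =>
      (E.conn_eq_zero_iff _).1 ((key u).1 (LinearMap.congr_fun hw u))
    exact ⟨t, by rw [ht]; abel⟩
  · rintro ⟨t, rfl⟩
    refine LinearMap.ext fun u => (key u).2 ((E.conn_eq_zero_iff _).2 ⟨t ≫ u, ?_⟩)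
    simp

end SES

/-- for `K ∈ add K'`, `α` is right minimal iff the connecting map
`c(ξ, K') : Hom(K, K') → Ext¹(Y, K')` is right minimal as a `Γ(K')`-module morphism. -/
theorem stmt9 {K Y : A} (E : SES K Y) (K' : A) (h : InAdd K' K) :
    RightMinimal E.p ↔ ModRightMinimal (E.conn K') := by
  constructor
  · intro hp g hg
    obtain ⟨w, rfl⟩ := h.exists_eq_leftCompEnd g
    obtain ⟨t, rfl⟩ := (E.conn_comp_leftCompEnd_eq_iff h w).1 hg
    have := hp _ ((E.comp_p_eq_p_iff _).2 ⟨t, rfl⟩)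
    have := isIso_id_add_comp_of_isIso_id_add_comp t E.i
    exact Function.bijective_iff_has_inverse.2 ⟨(inv (𝟙 K + E.i ≫ t) ≫ ·),
      IsIso.inv_hom_id_assoc _, IsIso.hom_inv_id_assoc _⟩
  · intro hc v hv
    obtain ⟨t, rfl⟩ := (E.comp_p_eq_p_iff v).1 hv
    have := h.isIso_of_bijective_comp _ (hc _ ((E.conn_comp_leftCompEnd_eq_iff h _).2 ⟨t, rfl⟩))
    exact isIso_id_add_comp_of_isIso_id_add_comp E.i t
end

section
/- Let A be a Hom-finite k-linear abelian category having Auslander-Reiten duality, and α : X → Y an epimorphism with kernel K. Then α is right τ⁻¹K-determined: for every morphism t : T → Y such that t ∘ φ factors through α for all φ : τ⁻¹K → T, the morphism t itself factors through α. -/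
/-!
By Auslander–Reiten duality and its naturality in `T`, the hypothesis on `t : T ⟶ Y` says that
every `k`-linear functional on `Ext¹(T, K)` kills the pullback `t^*[ξ]` of the class of
`ξ : 0 → K → X → Y → 0`, since it factors through `α^*`, and `α^*[ξ] = 0`. As `Ed` is an injective
cogenerator, `t^*[ξ] = 0`, and the long exact `Ext(T, -)`-sequence of `ξ` lifts `t` through `α`.
-/

set_option linter.unusedSectionVars false

open CategoryTheory Abelian Limits

universe w v u

attribute [local instance] CategoryTheory.Abelian.hasFiniteBiproducts

variable {A : Type u} [Category.{v} A] [Abelian A]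

variable [HasExt.{w} A]

universe w'

section AR

variable (k : Type u) [CommRing k] [IsArtinianRing k] [CategoryTheory.Linear k A]

/-- The `k`-submodule of `Hom(C, T)` of projectively trivial morphisms, i.e. those
factoring through every epimorphism ending at `T`. -/
def PTriv (C T : A) : Submodule k (C ⟶ T) where
  carrier := {f | ∀ ⦃W : A⦄ (g : W ⟶ T), Epi g → ∃ h : C ⟶ W, h ≫ g = f}
  add_mem' := by
    intro f f' hf hf' W g hg
    obtain ⟨h, rfl⟩ := hf g hg
    obtain ⟨h', rfl⟩ := hf' g hg
    exact ⟨h + h', by simp⟩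
  zero_mem' := by
    intro W g hg
    exact ⟨0, by simp⟩
  smul_mem' := by
    intro c f hf W g hg
    obtain ⟨h, rfl⟩ := hf g hg
    exact ⟨c • h, by simp⟩

/-- The stable Hom space `Hom̲(C, T) = Hom(C, T)/𝒫(C, T)`. -/
abbrev StHom (C T : A) := (C ⟶ T) ⧸ (PTriv (A := A) k C T)

variable [HasExt.{w} A]

/-- The `k`-module structure on `Ext¹(T, X)` induced by the `k`-linear structure
of the category, via the algebra map `k → End X` and pushout. -/
noncomputable instance extkMod (T X : A) : Module k (Ext T X 1) :=
  Module.compHom _ (algebraMap k (End X))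

lemma kSmul_def (T X : A) (c : k) (e : Ext T X 1) :
    c • e = e.comp (Ext.mk₀ (algebraMap k (End X) c)) (add_zero 1) := rfl

/-- Pullback (contravariant functoriality of `Ext¹(-, X)`) along `t : T ⟶ T'`,
as a `k`-linear map. -/
noncomputable def pbMap (X : A) {T T' : A} (t : T ⟶ T') :
    Ext T' X 1 →ₗ[k] Ext T X 1 where
  toFun e := (Ext.mk₀ t).comp e (zero_add 1)
  map_add' e e' := by
    rw [Ext.comp_add]
  map_smul' c e := by
    rw [kSmul_def, kSmul_def]
    exact (Ext.comp_assoc _ _ _ (zero_add 1) (add_zero 1) (by omega)).symm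

/-- Postcomposition with `t : T ⟶ T'` on stable Hom spaces, as a `k`-linear map. -/
noncomputable def stMap (C : A) {T T' : A} (t : T ⟶ T') :
    StHom (A := A) k C T →ₗ[k] StHom (A := A) k C T' :=
  Submodule.mapQ _ _ (Linear.rightComp k C t)
    (by
      intro f hf
      intro W g hg
      obtain ⟨h, hh⟩ := hf (pullback.snd g t) inferInstance
      refine ⟨h ≫ pullback.fst g t, ?_⟩
      rw [Category.assoc, pullback.condition, ← Category.assoc, hh]
      rfl)


/-- `α` is right `C`-determined. -/
def RightDetermined (C : A) {X Y : A} (α : X ⟶ Y) : Prop :=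
  ∀ ⦃T : A⦄ (t : T ⟶ Y), (∀ φ : C ⟶ T, Factors (φ ≫ t) α) → Factors t α

theorem Module.eq_zero_of_forall_linearMap_apply_eq_zero {R Q : Type u} [Ring R] [AddCommGroup Q]
    [Module R Q] [Module.Injective R Q]
    (hcog : ∀ (N : Type u) [AddCommGroup N] [Module R N] (x : N), x ≠ 0 →
      ∃ φ : N →ₗ[R] Q, φ x ≠ 0)
    {M : Type*} [AddCommGroup M] [Module R M] {x : M} (hx : ∀ θ : M →ₗ[R] Q, θ x = 0) :
    x = 0 := by
  by_contra hne
  -- `R ∙ x ≅ R ⧸ ann x` lives in the universe of `R`, where `hcog` applies.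
  set L := LinearMap.toSpanSingleton R M x
  have h1 : (Submodule.Quotient.mk 1 : R ⧸ LinearMap.ker L) ≠ 0 := by
    rw [Ne, Submodule.Quotient.mk_eq_zero, LinearMap.mem_ker, LinearMap.toSpanSingleton_apply_one]
    exact hne
  obtain ⟨φ, hφ⟩ := hcog _ _ h1
  obtain ⟨θ, hθ⟩ := Module.Injective.extension_property R Q _ _ (LinearMap.range L).subtype
    (Submodule.injective_subtype _) (φ ∘ₗ L.quotKerEquivRange.symm.toLinearMap)
  have hθx := LinearMap.congr_fun hθ (L.quotKerEquivRange (Submodule.Quotient.mk 1))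
  simp only [LinearMap.comp_apply, Submodule.subtype_apply, LinearEquiv.coe_coe,
    LinearEquiv.symm_apply_apply, LinearMap.quotKerEquivRange_apply_mk,
    LinearMap.toSpanSingleton_apply_one, L] at hθx
  exact hφ (hθx ▸ hx θ)

theorem CategoryTheory.ShortComplex.ShortExact.exists_lift_of_mk₀_comp_extClass_eq_zero
    {C : Type u} [Category.{v} C] [Abelian C] [HasExt.{w} C] {S : ShortComplex C}
    (hS : S.ShortExact) {T : C} {t : T ⟶ S.X₃}
    (ht : (Ext.mk₀ t).comp hS.extClass (zero_add 1) = 0) :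
    ∃ v : T ⟶ S.X₂, v ≫ S.g = t := by
  obtain ⟨x, hx⟩ := Ext.covariant_sequence_exact₃ T hS (Ext.mk₀ t) rfl ht
  obtain ⟨v, rfl⟩ := (Ext.mk₀_bijective T S.X₂).2 x
  exact ⟨v, (Ext.mk₀_bijective T S.X₃).1 (by rwa [Ext.mk₀_comp_mk₀] at hx)⟩

theorem exists_comp_pbMap_eq_of_forall_factors {C : Type u} [Category.{v} C] [Abelian C]
    [HasExt.{w} C] {R : Type u} [CommRing R] [IsArtinianRing R] [Linear R C]
    {Q : Type*} [AddCommGroup Q] [Module R Q] {K L : C}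
    (Ψ : ∀ T : C, (Ext T K 1 →ₗ[R] Q) ≃ₗ[R] StHom R L T)
    (nat : ∀ {T T' : C} (t : T ⟶ T') (θ : Ext T K 1 →ₗ[R] Q),
      Ψ T' (θ ∘ₗ pbMap R K t) = stMap R L t (Ψ T θ))
    {X Y T : C} {p : X ⟶ Y} {t : T ⟶ Y} (ht : ∀ φ : L ⟶ T, Factors (φ ≫ t) p)
    (θ : Ext T K 1 →ₗ[R] Q) :
    ∃ θ' : Ext X K 1 →ₗ[R] Q, θ ∘ₗ pbMap R K t = θ' ∘ₗ pbMap R K p := by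
  obtain ⟨φ, hφ⟩ := Submodule.Quotient.mk_surjective _ (Ψ T θ)
  obtain ⟨v, hv⟩ := ht φ
  refine ⟨(Ψ X).symm (Submodule.Quotient.mk v), (Ψ Y).injective ?_⟩
  rw [nat, nat, LinearEquiv.apply_symm_apply, ← hφ]
  change Submodule.Quotient.mk (φ ≫ t) = Submodule.Quotient.mk (v ≫ p)
  rw [hv]

/-- `Ψ` is Auslander–Reiten duality `D Ext¹(T, X) ≅ Hom̲(τ⁻¹X, T)`, with `tinv = τ⁻¹` and
`D = Hom_k(-, Ed)` for an injective cogenerator `Ed` of `k`-modules. -/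
theorem stmt17
    (Ed : Type u) [AddCommGroup Ed] [Module k Ed]
    (hinj : Module.Injective k Ed)
    (hcog : ∀ (N : Type u) [AddCommGroup N] [Module k N] (x : N), x ≠ 0 →
      ∃ φ : N →ₗ[k] Ed, φ x ≠ 0)
    (tinv : A → A)
    (Ψ : ∀ (T X : A), ((Ext T X 1) →ₗ[k] Ed) ≃ₗ[k] StHom (A := A) k (tinv X) T)
    (nat : ∀ (X : A) {T T' : A} (t : T ⟶ T') (θ : Ext T X 1 →ₗ[k] Ed),
      Ψ T' X (θ ∘ₗ pbMap k X t) = stMap k (tinv X) t (Ψ T X θ))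
    {K Y : A} (E : SES K Y) :
    RightDetermined (tinv K) E.p := by
  intro T t ht
  refine E.shortExact.exists_lift_of_mk₀_comp_extClass_eq_zero ?_
  have := hinj
  refine Module.eq_zero_of_forall_linearMap_apply_eq_zero hcog fun θ => ?_
  obtain ⟨θ', hθ'⟩ := exists_comp_pbMap_eq_of_forall_factors (Ψ · K) (nat K) ht θ
  calc θ ((Ext.mk₀ t).comp E.cls (zero_add 1))
      = θ' ((Ext.mk₀ E.p).comp E.cls (zero_add 1)) := LinearMap.congr_fun hθ' E.cls
    _ = 0 := by rw [SES.cls, E.shortExact.comp_extClass, map_zero]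

end AR
end

section
/- Let A be a Hom-finite k-linear abelian category having Auslander-Reiten duality, α : X → Y a right minimal epimorphism with kernel K, and C an object such that α is right C-determined. Then every non-injective indecomposable direct summand K' of K satisfies τ⁻¹K' ∈ add C. -/
/-!
Let `0 → K' → E' → τ⁻¹K' → 0` be the almost split sequence. By right minimality of `α`, the
composite `K' → K → X` is not a split mono (otherwise `K' = 0`), so it extends over `K' → E'`,
and the extension induces `t : τ⁻¹K' → Y`. If `t` factored through `α`, the split mono
`K' → K` would extend over `E'` and the almost split sequence would split. Hence, `α` being
right `C`-determined, some `φ : C → τ⁻¹K'` has `φ ≫ t` not factoring through `α`; as the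
almost split sequence is right almost split, `φ` must be a split epimorphism.
-/

set_option linter.unusedSectionVars false

open CategoryTheory Abelian Limits

universe w v u

attribute [local instance] CategoryTheory.Abelian.hasFiniteBiproducts

variable {A : Type u} [Category.{v} A] [Abelian A]

variable [HasExt.{w} A]

universe w'

section AR

variable (k : Type u) [CommRing k] [IsArtinianRing k] [CategoryTheory.Linear k A]

variable [HasExt.{w} A]

/-- A short exact sequence `0 → X → E → Z → 0` is an almost split sequence: it is
non-split, right almost split and left almost split. -/
def IsAlmostSplitSES {X Z : A} (S : SES X Z) : Prop :=
  (¬ ∃ s : Z ⟶ S.X, s ≫ S.p = 𝟙 Z) ∧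
  (∀ ⦃W : A⦄ (g : W ⟶ Z), (¬ ∃ s : Z ⟶ W, s ≫ g = 𝟙 Z) → ∃ h : W ⟶ S.X, h ≫ S.p = g) ∧
  (∀ ⦃W : A⦄ (u : X ⟶ W), (¬ ∃ r : W ⟶ X, u ≫ r = 𝟙 X) → ∃ h : S.X ⟶ W, S.i ≫ h = u)

section

variable {𝒜 : Type*} [Category 𝒜] [Abelian 𝒜]

lemma InAdd.of_retract {K M M' : 𝒜} (hM : InAdd K M) (s : M' ⟶ M) (r : M ⟶ M')
    (hsr : s ≫ r = 𝟙 M') : InAdd K M' := by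
  obtain ⟨n, s', r', hsr'⟩ := hM
  exact ⟨n, s ≫ s', r' ≫ r, by simp [reassoc_of% hsr', hsr]⟩

lemma Factors.comp_of_comm_sq {W X' Z X Y : 𝒜} {g : W ⟶ Z} {p : X' ⟶ Z} {t : Z ⟶ Y}
    {h : X' ⟶ X} {α : X ⟶ Y} (hg : Factors g p) (hsq : p ≫ t = h ≫ α) :
    Factors (g ≫ t) α := by
  obtain ⟨v, rfl⟩ := hg
  exact ⟨v ≫ h, by rw [Category.assoc, Category.assoc, hsq]⟩

lemma RightMinimal.isZero_of_retraction {X Y K' : 𝒜} {α : X ⟶ Y} (hα : RightMinimal α)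
    {f : K' ⟶ X} (hf : f ≫ α = 0) {r : X ⟶ K'} (hr : f ≫ r = 𝟙 K') : IsZero K' := by
  have := hα (𝟙 X - r ≫ f) (by simp [Preadditive.sub_comp, hf])
  have hf0 : f = 0 := by
    rw [← cancel_mono (𝟙 X - r ≫ f)]
    simp [Preadditive.comp_sub, reassoc_of% hr]
  exact (IsZero.iff_id_eq_zero K').2 (by rw [← hr, hf0, zero_comp])

lemma SES.exists_section_of_retraction {K Y : 𝒜} (E : SES K Y) (r : E.X ⟶ K)
    (hr : E.i ≫ r = 𝟙 K) : ∃ σ : Y ⟶ E.X, σ ≫ E.p = 𝟙 Y :=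
  let sp := ShortComplex.Splitting.ofExactOfRetraction _ E.shortExact.exact r hr
    E.shortExact.epi_g
  ⟨sp.s, sp.s_g⟩

lemma SES.exists_desc {K Y Z : 𝒜} (E : SES K Y) (h : E.X ⟶ Z) (hh : E.i ≫ h = 0) :
    ∃ t : Y ⟶ Z, E.p ≫ t = h :=
  have := E.shortExact.epi_g
  E.shortExact.exact.desc' h hh

lemma SES.exists_extension_of_factors {K' Z K Y : 𝒜} (S : SES K' Z) (E : SES K Y)
    {s : K' ⟶ K} {h : S.X ⟶ E.X} {t : Z ⟶ Y} (hs : S.i ≫ h = s ≫ E.i)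
    (ht : S.p ≫ t = h ≫ E.p) (hfac : Factors t E.p) : ∃ w : S.X ⟶ K, S.i ≫ w = s := by
  have := E.shortExact.mono_f
  obtain ⟨v, hv⟩ := hfac
  obtain ⟨w, hw⟩ := E.shortExact.exact.lift' (h - S.p ≫ v) (by
    simp [Preadditive.sub_comp, hv, ht])
  refine ⟨w, (cancel_mono E.i).1 ?_⟩
  rw [Category.assoc, hw, Preadditive.comp_sub, hs, ← Category.assoc, S.zero, zero_comp, sub_zero]

end

theorem stmt18_general
    (tinv : A → A)
    (ass : ∀ X : A, ¬ Injective X → Indecomposable X →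
      ∃ S : SES X (tinv X), IsAlmostSplitSES S)
    {K Y : A} (E : SES K Y) (hrm : RightMinimal E.p)
    (C : A) (hdet : RightDetermined C E.p) :
    ∀ K' : A, ¬ Injective K' → Indecomposable K' →
      (∃ (s : K' ⟶ K) (r : K ⟶ K'), s ≫ r = 𝟙 K') → InAdd C (tinv K') := by
  rintro K' hninj hind ⟨s, r, hsr⟩
  obtain ⟨S, hns, hras, hlas⟩ := ass K' hninj hind
  obtain ⟨h, hh⟩ := hlas (s ≫ E.i) fun ⟨r', hr'⟩ =>
    hind.1 (hrm.isZero_of_retraction (by simp [E.zero]) hr')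
  obtain ⟨t, ht⟩ := S.exists_desc (h ≫ E.p) (by rw [reassoc_of% hh, E.zero, comp_zero])
  have hnt : ¬ Factors t E.p := fun hfac => by
    obtain ⟨w, hw⟩ := S.exists_extension_of_factors E hh ht hfac
    exact hns (S.exists_section_of_retraction (w ≫ r) (by rw [reassoc_of% hw, hsr]))
  obtain ⟨φ, hφ⟩ : ∃ φ : C ⟶ tinv K', ¬ Factors (φ ≫ t) E.p := by
    by_contra! hall
    exact hnt (hdet t hall)
  obtain ⟨σ, hσ⟩ : ∃ σ : tinv K' ⟶ C, σ ≫ φ = 𝟙 (tinv K') := by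
    by_contra hsplit
    obtain ⟨g, hg⟩ := hras φ hsplit
    exact hφ (Factors.comp_of_comm_sq ⟨g, hg⟩ ht)
  exact (InAdd.self C).of_retract σ φ hσ

/-- in a Hom-finite `k`-linear abelian category with Auslander-Reiten
duality (formulated as `D Ext¹(T, X) ≅ Hom̲(τ⁻¹X, T)`, with almost split sequences
`0 → X → E → τ⁻¹X → 0` for every non-injective indecomposable `X`), if `α : X ⟶ Y`
is a right minimal epimorphism with kernel `K` which is right `C`-determined, then
every non-injective indecomposable direct summand `K'` of `K` satisfies
`τ⁻¹K' ∈ add C`. -/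
theorem stmt18
    (homfin : ∀ X Y : A, Module.Finite k (X ⟶ Y))
    (Ed : Type u) [AddCommGroup Ed] [Module k Ed]
    (hinj : Module.Injective k Ed)
    (hcog : ∀ (N : Type u) [AddCommGroup N] [Module k N] (x : N), x ≠ 0 →
      ∃ φ : N →ₗ[k] Ed, φ x ≠ 0)
    (hminimal : ∀ (E' : Type u) [AddCommGroup E'] [Module k E'], Module.Injective k E' →
      (∀ (N : Type u) [AddCommGroup N] [Module k N] (x : N), x ≠ 0 →
        ∃ φ : N →ₗ[k] E', φ x ≠ 0) →
      ∃ ι : Ed →ₗ[k] E', Function.Injective ι)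
    (tinv : A → A)
    (Ψ : ∀ (T X : A), ((Ext T X 1) →ₗ[k] Ed) ≃ₗ[k] StHom (A := A) k (tinv X) T)
    (nat : ∀ (X : A) {T T' : A} (t : T ⟶ T') (θ : Ext T X 1 →ₗ[k] Ed),
      Ψ T' X (θ ∘ₗ pbMap k X t) = stMap k (tinv X) t (Ψ T X θ))
    (ass : ∀ X : A, ¬ Injective X → Indecomposable X →
      ∃ S : SES X (tinv X), IsAlmostSplitSES S)
    {K Y : A} (E : SES K Y) (hrm : RightMinimal E.p)
    (C : A) (hdet : RightDetermined C E.p) :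
    ∀ K' : A, ¬ Injective K' → Indecomposable K' →
      (∃ (s : K' ⟶ K) (r : K ⟶ K'), s ≫ r = 𝟙 K') → InAdd C (tinv K') :=
  stmt18_general tinv ass E hrm C hdet

end AR
end
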